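/- arXiv:2504.04738 — 5 statements merged into one kernel-verified Lean document; each statement's English description precedes it below -/
import Mathlib

section
/- Let P ⊆ ℝⁿ be a polyhedron defined by finitely many constraints aᵢᵀx = bᵢ (i ∈ E), aᵢᵀx ≥ bᵢ (i ∈ I₁), and strict inequalities aᵢᵀx > bᵢ (i ∈ I₂). Let Q be its closure, defined by the same constraints with all strict inequalities relaxed to non-strict. If P is nonempty, then sup_{x ∈ P} cᵀx = sup_{x ∈ Q} cᵀx for every c ∈ ℝⁿ. -/
/-- Let `P ⊆ ℝⁿ` be a polyhedron defined by equalities (`E`), non-strict inequalities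
(`I₁`), and strict inequalities (`I₂`), and let `Q` be its closure (all strict
inequalities relaxed). If `P` is nonempty, then `sup_{x ∈ P} cᵀx = sup_{x ∈ Q} cᵀx`
for every `c ∈ ℝⁿ` (suprema in the extended reals). -/
theorem sup_open_polyhedron_eq_sup_closure {n : ℕ} {ι : Type*} [DecidableEq ι]
    (E I₁ I₂ : Finset ι) (a : ι → (Fin n → ℝ)) (b : ι → ℝ) (c : Fin n → ℝ)
    (P : Set (Fin n → ℝ))
    (hP : P = {x | (∀ i ∈ E, ∑ j, a i j * x j = b i) ∧
                   (∀ i ∈ I₁, ∑ j, a i j * x j ≥ b i) ∧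
                   (∀ i ∈ I₂, ∑ j, a i j * x j > b i)})
    (Q : Set (Fin n → ℝ))
    (hQ : Q = {x | (∀ i ∈ E, ∑ j, a i j * x j = b i) ∧
                   (∀ i ∈ I₁ ∪ I₂, ∑ j, a i j * x j ≥ b i)})
    (hne : P.Nonempty) :
    (⨆ x ∈ P, ((∑ j, c j * x j : ℝ) : EReal)) = ⨆ x ∈ Q, ((∑ j, c j * x j : ℝ) : EReal) := by
  subst hP hQ
  obtain ⟨x₀, hx₀⟩ := hne
  obtain ⟨hx₀E, hx₀1, hx₀2⟩ := hx₀
  apply le_antisymm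
  · -- P ⊆ Q
    refine iSup₂_le fun x hx => ?_
    obtain ⟨hE, h1, h2⟩ := hx
    refine le_iSup₂_of_le x ⟨hE, fun i hi => ?_⟩ le_rfl
    rcases Finset.mem_union.1 hi with h | h
    · exact h1 i h
    · exact le_of_lt (h2 i h)
  · refine iSup₂_le fun y hy => ?_
    obtain ⟨hyE, hy1⟩ := hy
    set S := ⨆ x ∈ {x : Fin n → ℝ | (∀ i ∈ E, ∑ j, a i j * x j = b i) ∧
        (∀ i ∈ I₁, ∑ j, a i j * x j ≥ b i) ∧
        (∀ i ∈ I₂, ∑ j, a i j * x j > b i)}, ((∑ j, c j * x j : ℝ) : EReal) with hS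
    have lin : ∀ (w : Fin n → ℝ) (t : ℝ),
        (∑ j, w j * ((1-t) * y j + t * x₀ j))
          = (1-t) * (∑ j, w j * y j) + t * (∑ j, w j * x₀ j) := by
      intro w t
      rw [Finset.mul_sum, Finset.mul_sum, ← Finset.sum_add_distrib]
      exact Finset.sum_congr rfl fun j _ => by ring
    have key : ∀ ε : ℝ, 0 < ε → (((∑ j, c j * y j) - ε : ℝ) : EReal) ≤ S := by
      intro ε hε
      set d : ℝ := (∑ j, c j * x₀ j) - (∑ j, c j * y j) with hd
      set t : ℝ := min 1 (ε / (1 + |d|)) with ht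
      have habs : (0:ℝ) ≤ |d| := abs_nonneg d
      have hpos : (0:ℝ) < 1 + |d| := by linarith
      have ht0 : 0 < t := lt_min one_pos (div_pos hε hpos)
      have ht1 : t ≤ 1 := min_le_left _ _
      have ht2 : t ≤ ε / (1 + |d|) := min_le_right _ _
      set xt : Fin n → ℝ := fun j => (1-t) * y j + t * x₀ j with hxt
      have hmem : xt ∈ {x : Fin n → ℝ | (∀ i ∈ E, ∑ j, a i j * x j = b i) ∧
          (∀ i ∈ I₁, ∑ j, a i j * x j ≥ b i) ∧
          (∀ i ∈ I₂, ∑ j, a i j * x j > b i)} := by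
        refine ⟨fun i hi => ?_, fun i hi => ?_, fun i hi => ?_⟩
        · rw [hxt]; rw [lin (a i) t, hyE i hi, hx₀E i hi]; ring
        · have h1 := hy1 i (Finset.mem_union_left _ hi)
          have h2 := hx₀1 i hi
          rw [hxt, lin (a i) t]
          nlinarith
        · have h1 := hy1 i (Finset.mem_union_right _ hi)
          have h2 := hx₀2 i hi
          rw [hxt, lin (a i) t]
          nlinarith
      have hval : (∑ j, c j * y j) - ε ≤ ∑ j, c j * xt j := by
        rw [hxt, lin c t]
        have h1 : t * |d| ≤ ε := by
          have h3 : t * (1 + |d|) ≤ ε := (le_div_iff₀ hpos).1 ht2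
          nlinarith
        have h2 : -|d| ≤ d := neg_abs_le d
        nlinarith
      calc (((∑ j, c j * y j) - ε : ℝ) : EReal) ≤ ((∑ j, c j * xt j : ℝ) : EReal) :=
            EReal.coe_le_coe_iff.2 hval
        _ ≤ S := le_iSup₂_of_le xt hmem le_rfl
    have htend : Filter.Tendsto (fun ε : ℝ => (((∑ j, c j * y j) - ε : ℝ) : EReal))
        (nhdsWithin 0 (Set.Ioi 0)) (nhds ((∑ j, c j * y j : ℝ) : EReal)) := by
      have hid : Filter.Tendsto (fun ε : ℝ => ε) (nhdsWithin 0 (Set.Ioi 0)) (nhds 0) :=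
        Filter.tendsto_id.mono_left nhdsWithin_le_nhds
      have h0 := hid.const_sub (∑ j, c j * y j)
      rw [sub_zero] at h0
      exact (continuous_coe_real_ereal.tendsto _).comp h0
    exact le_of_tendsto htend ((Filter.eventually_mem_set.2 self_mem_nhdsWithin).mono
      fun ε hε => key ε hε)
end

section
/- Let P be a polyhedron with possibly strict inequalities, Q its closure (assumed nonempty), and R := {(z, x) ∈ ℝ≥0 × ℝⁿ : aᵢᵀx = bᵢ ∀i ∈ E, aᵢᵀx ≥ bᵢ ∀i ∈ I₁, aᵢᵀx ≥ bᵢ + z ∀i ∈ I₂}. If (ẑ, x̂) maximizes z over {(z,x) ∈ R : z ≤ 1}, then P is nonempty if and only if ẑ > 0; moreover if ẑ > 0 then x̂ ∈ P. -/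
/-- Linear feasibility for polyhedra with strict inequalities. Let `P` be a polyhedron
with possibly strict inequalities, `Q` its (nonempty) closure, and
`R := {(z, x) : z ≥ 0, aᵢᵀx = bᵢ (i ∈ E), aᵢᵀx ≥ bᵢ (i ∈ I₁), aᵢᵀx ≥ bᵢ + z (i ∈ I₂)}`.
If `(zh, xh)` maximizes `z` over `{(z,x) ∈ R : z ≤ 1}`, then `P` is nonempty iff
`zh > 0`, and if `zh > 0` then `xh ∈ P`. -/
theorem open_polyhedron_feasibility {n : ℕ} {ι : Type*}
    (E I₁ I₂ : Finset ι) (a : ι → (Fin n → ℝ)) (b : ι → ℝ)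
    (P : Set (Fin n → ℝ))
    (hP : P = {x | (∀ i ∈ E, ∑ j, a i j * x j = b i) ∧
                   (∀ i ∈ I₁, ∑ j, a i j * x j ≥ b i) ∧
                   (∀ i ∈ I₂, ∑ j, a i j * x j > b i)})
    (Q : Set (Fin n → ℝ))
    (hQ : Q = {x | (∀ i ∈ E, ∑ j, a i j * x j = b i) ∧
                   (∀ i ∈ I₁, ∑ j, a i j * x j ≥ b i) ∧
                   (∀ i ∈ I₂, ∑ j, a i j * x j ≥ b i)})
    (hQne : Q.Nonempty)
    (R : Set (ℝ × (Fin n → ℝ)))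
    (hR : R = {p | 0 ≤ p.1 ∧ (∀ i ∈ E, ∑ j, a i j * p.2 j = b i) ∧
                   (∀ i ∈ I₁, ∑ j, a i j * p.2 j ≥ b i) ∧
                   (∀ i ∈ I₂, ∑ j, a i j * p.2 j ≥ b i + p.1)})
    (zh : ℝ) (xh : Fin n → ℝ)
    (hmem : (zh, xh) ∈ R) (hle : zh ≤ 1)
    (hmax : ∀ p ∈ R, p.1 ≤ 1 → p.1 ≤ zh) :
    (P.Nonempty ↔ 0 < zh) ∧ (0 < zh → xh ∈ P) := by
  subst hP hQ hR
  obtain ⟨hz0, hE, hI1, hI2⟩ := hmem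
  have hpos : 0 < zh → xh ∈ {x | (∀ i ∈ E, ∑ j, a i j * x j = b i) ∧
      (∀ i ∈ I₁, ∑ j, a i j * x j ≥ b i) ∧
      (∀ i ∈ I₂, ∑ j, a i j * x j > b i)} := by
    intro hz
    refine ⟨hE, hI1, fun i hi => ?_⟩
    have := hI2 i hi
    linarith
  refine ⟨⟨fun ⟨x, hx⟩ => ?_, fun h => ⟨xh, hpos h⟩⟩, hpos⟩
  obtain ⟨hxE, hx1, hx2⟩ := hx
  by_cases hne : I₂.Nonempty
  · set ε := min 1 (I₂.inf' hne fun i => ∑ j, a i j * x j - b i) with hε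
    have hεpos : 0 < ε := by
      apply lt_min one_pos
      rw [Finset.lt_inf'_iff]
      intro i hi
      have := hx2 i hi
      linarith
    have hεle : ε ≤ 1 := min_le_left _ _
    have : ε ≤ zh := by
      refine hmax (ε, x) ⟨le_of_lt hεpos, hxE, hx1, fun i hi => ?_⟩ hεle
      have h2 : ε ≤ ∑ j, a i j * x j - b i :=
        le_trans (min_le_right _ _) (Finset.inf'_le _ hi)
      simp only
      linarith
    linarith
  · have : (1 : ℝ) ≤ zh := by
      refine hmax (1, x) ⟨zero_le_one, hxE, hx1, fun i hi => ?_⟩ le_rfl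
      exact absurd ⟨i, hi⟩ hne
    linarith
end

section
/- For makespan minimization, removing jobs that appear after the last job of a maximum-load machine does not change the LPT makespan but can only decrease (or keep equal) the optimal makespan. Formally, let z = LPT(x) for sorted x ∈ ℝⁿ, let i be a machine achieving the makespan, and let k be the largest job index assigned to machine i. Then LPT on the truncated input (x₁,...,x_k) produces the restriction of z to the first k jobs, the makespan of LPT on (x₁,...,x_k) equals c(x, z), and OPT(x₁,...,x_k) ≤ OPT(x). -/
/-- The least-index machine among those with minimum load. -/
noncomputable def minIdx {m : ℕ} (loads : Fin (m + 1) → ℝ) : Fin (m + 1) :=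
  (Finset.univ.filter fun i => ∀ j, loads i ≤ loads j).min' (by
    obtain ⟨i, -, hi⟩ := Finset.exists_min_image Finset.univ loads ⟨0, Finset.mem_univ 0⟩
    exact ⟨i, Finset.mem_filter.2 ⟨Finset.mem_univ i, fun j => hi j (Finset.mem_univ j)⟩⟩)

/-- LPT's greedy assignment loop, starting from the given machine loads:
assign each job in order to the currently least-loaded machine
(ties broken in favor of the least machine index). -/
noncomputable def lptGo {m : ℕ} (loads : Fin (m + 1) → ℝ) : List ℝ → List (Fin (m + 1))
  | [] => []
  | x :: xs => minIdx loads :: lptGo (Function.update loads (minIdx loads) (loads (minIdx loads) + x)) xs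

/-- The LPT algorithm on `m + 1` machines: jobs (given in non-increasing order of size)
are assigned greedily to the least-loaded machine. -/
noncomputable def lpt (m : ℕ) (jobs : List ℝ) : List (Fin (m + 1)) :=
  lptGo (fun _ => 0) jobs

/-- The load of machine `i` under the assignment `z` of the jobs `jobs`. -/
def loadOf {m : ℕ} (jobs : List ℝ) (z : List (Fin (m + 1))) (i : Fin (m + 1)) : ℝ :=
  ((jobs.zip z).map (fun p => if p.2 = i then p.1 else 0)).sum

/-- The makespan (maximum machine load) of assignment `z` for jobs `jobs`. -/
noncomputable def makespan {m : ℕ} (jobs : List ℝ) (z : List (Fin (m + 1))) : ℝ :=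
  Finset.univ.sup' Finset.univ_nonempty (loadOf jobs z)

/-- The optimal makespan over all assignments of the jobs to the `m + 1` machines. -/
noncomputable def optMakespan (m : ℕ) (jobs : List ℝ) : ℝ :=
  ⨅ z : Fin jobs.length → Fin (m + 1),
    Finset.univ.sup' Finset.univ_nonempty
      (fun i => ∑ j : Fin jobs.length, if z j = i then jobs.get j else 0)

private lemma lptGo_length {m : ℕ} : ∀ (l : List ℝ) (loads : Fin (m + 1) → ℝ),
    (lptGo loads l).length = l.length
  | [], _ => rfl
  | x :: xs, loads => by
    simp [lptGo, lptGo_length xs]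

private lemma lptGo_take {m : ℕ} : ∀ (l : List ℝ) (loads : Fin (m + 1) → ℝ) (n : ℕ),
    lptGo loads (l.take n) = (lptGo loads l).take n
  | [], loads, n => by simp [lptGo]
  | x :: xs, loads, 0 => by simp [lptGo]
  | x :: xs, loads, n + 1 => by simp [lptGo, lptGo_take xs]

/-- Truncation after the max-loaded machine's last job. Let `z = LPT(x)` for sorted
non-negative jobs, let `i` be a machine achieving the makespan, and let `k` be the
largest job index assigned to machine `i`. Then LPT on the truncated input
`(x₁, ..., x_{k+1})` produces the restriction of `z` to the first `k + 1` jobs, its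
makespan equals the makespan of `z` on the full input, and the optimal makespan of
the truncated input is at most that of the full input. (Indices are 0-based, so the
truncated input consists of the first `k + 1` jobs.) -/
theorem lpt_truncation {m : ℕ} (jobs : List ℝ) (hne : jobs ≠ [])
    (hsorted : jobs.Pairwise (· ≥ ·)) (hnonneg : ∀ a ∈ jobs, 0 ≤ a)
    (z : List (Fin (m + 1))) (hz : z = lpt m jobs)
    (i : Fin (m + 1)) (hmax : loadOf jobs z i = makespan jobs z)
    (k : ℕ) (hk : k < z.length) (hki : z.get ⟨k, hk⟩ = i)
    (hlast : ∀ j, ∀ hj : j < z.length, k < j → z.get ⟨j, hj⟩ ≠ i) :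
    lpt m (jobs.take (k + 1)) = z.take (k + 1) ∧
    makespan (jobs.take (k + 1)) (z.take (k + 1)) = makespan jobs z ∧
    optMakespan m (jobs.take (k + 1)) ≤ optMakespan m jobs := by
  have hlen : z.length = jobs.length := by rw [hz]; exact lptGo_length _ _
  have hzl : (jobs.zip z).length = z.length := by
    rw [List.length_zip, hlen, min_self]
  have h1 : lpt m (jobs.take (k + 1)) = z.take (k + 1) := by
    rw [hz]; exact lptGo_take _ _ _
  -- splitting loads
  have hzip_take : (jobs.take (k + 1)).zip (z.take (k + 1)) = (jobs.zip z).take (k + 1) :=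
    (List.take_zipWith).symm
  have hsplit : ∀ a, loadOf jobs z a = loadOf (jobs.take (k + 1)) (z.take (k + 1)) a +
      (((jobs.zip z).drop (k + 1)).map (fun p => if p.2 = a then p.1 else 0)).sum := by
    intro a
    unfold loadOf
    rw [hzip_take]
    conv_lhs => rw [← List.take_append_drop (k + 1) (jobs.zip z)]
    rw [List.map_append, List.sum_append]
  have hdropnonneg : ∀ a,
      0 ≤ (((jobs.zip z).drop (k + 1)).map (fun p => if p.2 = a then p.1 else 0)).sum := by
    intro a
    apply List.sum_nonneg
    intro x hx
    obtain ⟨p, hp, rfl⟩ := List.mem_map.1 hx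
    have hpz : p ∈ jobs.zip z := List.mem_of_mem_drop hp
    have := (List.of_mem_zip (a := p.1) (b := p.2) (by simpa using hpz)).1
    split
    · exact hnonneg _ this
    · exact le_refl 0
  have hdropzero :
      (((jobs.zip z).drop (k + 1)).map (fun p => if p.2 = i then p.1 else 0)).sum = 0 := by
    apply List.sum_eq_zero
    intro x hx
    obtain ⟨p, hp, rfl⟩ := List.mem_map.1 hx
    have hpi : p.2 ≠ i := by
      obtain ⟨j, hj, rfl⟩ := List.mem_iff_getElem.1 hp
      have hj' : k + 1 + j < z.length := by
        rw [List.length_drop, hzl] at hj; omega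
      rw [List.getElem_drop, List.getElem_zip]
      simpa using hlast (k + 1 + j) hj' (by omega)
    simp [hpi]
  have hLi : loadOf (jobs.take (k + 1)) (z.take (k + 1)) i = loadOf jobs z i := by
    rw [hsplit i, hdropzero, add_zero]
  have hLle : ∀ a, loadOf (jobs.take (k + 1)) (z.take (k + 1)) a ≤ loadOf jobs z a := by
    intro a
    rw [hsplit a]
    exact le_add_of_nonneg_right (hdropnonneg a)
  have h2 : makespan (jobs.take (k + 1)) (z.take (k + 1)) = makespan jobs z := by
    apply le_antisymm
    · apply Finset.sup'_le
      intro a _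
      exact (hLle a).trans (Finset.le_sup' _ (Finset.mem_univ a))
    · rw [← hmax, ← hLi]
      exact Finset.le_sup' _ (Finset.mem_univ i)
  refine ⟨h1, h2, ?_⟩
  -- part 3
  have htl : (jobs.take (k + 1)).length ≤ jobs.length := by
    rw [List.length_take]; exact min_le_right _ _
  set tl := (jobs.take (k + 1)).length with htldef
  have hG0 : ∀ w : Fin tl → Fin (m + 1),
      (0 : ℝ) ≤ Finset.univ.sup' Finset.univ_nonempty
        (fun a => ∑ j : Fin tl, if w j = a then (jobs.take (k + 1)).get j else 0) := by
    intro w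
    refine le_trans ?_ (Finset.le_sup' _ (Finset.mem_univ (0 : Fin (m + 1))))
    apply Finset.sum_nonneg
    intro j _
    simp only [List.get_eq_getElem, List.getElem_take]
    split
    · exact hnonneg _ (List.getElem_mem _)
    · exact le_refl 0
  have hbdd : BddBelow (Set.range (fun w : Fin tl → Fin (m + 1) =>
      Finset.univ.sup' Finset.univ_nonempty
        (fun a => ∑ j : Fin tl, if w j = a then (jobs.take (k + 1)).get j else 0))) := by
    refine ⟨0, ?_⟩
    rintro _ ⟨w, rfl⟩
    exact hG0 w
  unfold optMakespan
  apply le_ciInf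
  intro z'
  refine le_trans (ciInf_le hbdd (fun j => z' (Fin.castLE htl j))) ?_
  apply Finset.sup'_le
  intro a _
  refine le_trans ?_ (Finset.le_sup' _ (Finset.mem_univ a))
  have step : ∀ j : Fin tl,
      (if z' (Fin.castLE htl j) = a then (jobs.take (k + 1)).get j else 0) =
      (fun j' : Fin jobs.length => if z' j' = a then jobs.get j' else 0) (Fin.castLE htl j) := by
    intro j
    simp only [List.get_eq_getElem, List.getElem_take, Fin.coe_castLE]
  rw [Finset.sum_congr rfl (fun j _ => step j)]
  have hmap : ∑ j : Fin tl,
      (fun j' : Fin jobs.length => if z' j' = a then jobs.get j' else 0) (Fin.castLE htl j) =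
      ∑ x ∈ Finset.univ.map (Fin.castLEEmb htl),
        (fun j' : Fin jobs.length => if z' j' = a then jobs.get j' else 0) x := by
    rw [Finset.sum_map]
    rfl
  rw [hmap]
  apply Finset.sum_le_sum_of_subset_of_nonneg (Finset.subset_univ _)
  intro j _ _
  split
  · exact hnonneg _ (by simp only [List.get_eq_getElem]; exact List.getElem_mem _)
  · exact le_refl 0
end

section
/- For m = 2 machines, the hard instance x = (3, 3, 2, 2, 2) (5 jobs) satisfies: LPT produces makespan 7 while the optimal makespan is 6, so the ratio is 7/6 = (4·2−1)/(3·2); moreover 7/6 is an upper bound on the LPT makespan divided by the optimal makespan for all inputs with m = 2. -/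
lemma minIdx_le {m : ℕ} (loads : Fin (m + 1) → ℝ) (j : Fin (m + 1)) :
    loads (minIdx loads) ≤ loads j := by
  have h : minIdx loads ∈ Finset.univ.filter fun i => ∀ j, loads i ≤ loads j :=
    Finset.min'_mem _ _
  rw [Finset.mem_filter] at h
  exact h.2 j

lemma minIdx_two (loads : Fin 2 → ℝ) :
    minIdx (m := 1) loads = if loads 0 ≤ loads 1 then 0 else 1 := by
  unfold minIdx
  split_ifs with h
  · apply le_antisymm
    · apply Finset.min'_le
      simp only [Finset.mem_filter, Finset.mem_univ, true_and]
      intro j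
      fin_cases j
      · exact le_refl _
      · exact h
    · exact Fin.zero_le _
  · push_neg at h
    have he : (Finset.univ.filter fun i : Fin 2 => ∀ j, loads i ≤ loads j) = {1} := by
      ext i
      simp only [Finset.mem_filter, Finset.mem_univ, true_and, Finset.mem_singleton]
      constructor
      · intro hc
        fin_cases i
        · exact absurd (hc 1) (not_le.2 h)
        · rfl
      · rintro rfl j
        fin_cases j
        · exact h.le
        · exact le_refl _
    simp only [he, Finset.min'_singleton]

/-- final loads after running LPT from `loads` on jobs `xs` -/
noncomputable def fl (loads : Fin 2 → ℝ) : List ℝ → Fin 2 → ℝ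
  | [] => loads
  | x :: xs => fl (Function.update loads (minIdx (m := 1) loads)
      (loads (minIdx (m := 1) loads) + x)) xs

lemma fl_append (a b : List ℝ) : ∀ loads, fl loads (a ++ b) = fl (fl loads a) b := by
  induction a with
  | nil => intro loads; rfl
  | cons x xs ih => intro loads; simp only [List.cons_append, fl]; exact ih _

lemma loadOf_lptGo (xs : List ℝ) : ∀ (loads : Fin 2 → ℝ) (i : Fin 2),
    loadOf (m := 1) xs (lptGo loads xs) i = fl loads xs i - loads i := by
  induction xs with
  | nil => intro loads i; simp [loadOf, fl, lptGo]
  | cons x xs ih =>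
    intro loads i
    simp only [lptGo, loadOf, List.zip_cons_cons, List.map_cons, List.sum_cons, fl]
    rw [show ((xs.zip (lptGo (Function.update loads (minIdx loads)
        (loads (minIdx loads) + x)) xs)).map (fun p => if p.2 = i then p.1 else 0)).sum
      = loadOf (m := 1) xs (lptGo (Function.update loads (minIdx loads)
        (loads (minIdx loads) + x)) xs) i from rfl, ih]
    rcases eq_or_ne (minIdx (m := 1) loads) i with hh | hh
    · subst hh; simp [Function.update]; ring
    · simp [Function.update, hh, (Ne.symm hh)]

lemma sup2 (f : Fin 2 → ℝ) :
    Finset.univ.sup' Finset.univ_nonempty f = max (f 0) (f 1) := by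
  apply le_antisymm
  · apply Finset.sup'_le
    intro j _
    fin_cases j
    · exact le_max_left _ _
    · exact le_max_right _ _
  · exact max_le (Finset.le_sup' f (Finset.mem_univ 0)) (Finset.le_sup' f (Finset.mem_univ 1))

lemma makespan_lpt (xs : List ℝ) :
    makespan xs (lpt 1 xs) = max (fl (fun _ => 0) xs 0) (fl (fun _ => 0) xs 1) := by
  unfold makespan lpt
  rw [sup2]
  rw [loadOf_lptGo, loadOf_lptGo]
  ring_nf

lemma fl_sum (xs : List ℝ) : ∀ loads : Fin 2 → ℝ,
    fl loads xs 0 + fl loads xs 1 = loads 0 + loads 1 + xs.sum := by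
  induction xs with
  | nil => intro loads; simp [fl]
  | cons x xs ih =>
    intro loads
    simp only [fl, List.sum_cons, ih]
    have h := minIdx_two loads
    split_ifs at h <;> rw [h] <;> simp [Function.update] <;> ring

lemma fl_mono (xs : List ℝ) (hx : ∀ a ∈ xs, 0 ≤ a) : ∀ (loads : Fin 2 → ℝ) (i : Fin 2),
    loads i ≤ fl loads xs i := by
  induction xs with
  | nil => intro loads i; exact le_refl _
  | cons x xs ih =>
    intro loads i
    refine le_trans ?_ (ih (fun a ha => hx a (List.mem_cons_of_mem _ ha)) _ i)
    rcases eq_or_ne (minIdx (m := 1) loads) i with hh | hh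
    · subst hh; simp [Function.update]; exact hx x List.mem_cons_self
    · simp [Function.update, Ne.symm hh]

lemma fl_cons (loads : Fin 2 → ℝ) (x : ℝ) (xs : List ℝ) :
    fl loads (x :: xs) = fl (Function.update loads (minIdx (m := 1) loads)
      (loads (minIdx (m := 1) loads) + x)) xs := rfl

lemma fl_nil (loads : Fin 2 → ℝ) : fl loads [] = loads := rfl

lemma Bmin2 (a b : ℝ) (hb : 0 ≤ b) (hab : b ≤ a) :
    fl (fun _ => 0) [a, b] 0 ≤ b ∨ fl (fun _ => 0) [a, b] 1 ≤ b := by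
  have h0 : minIdx (m := 1) (fun _ => (0:ℝ)) = 0 := by rw [minIdx_two]; norm_num
  rw [fl_cons, h0]
  set l1 : Fin 2 → ℝ := Function.update (fun _ => (0:ℝ)) 0 ((fun _ => (0:ℝ)) 0 + a) with hl1
  have l10 : l1 0 = a := by simp [hl1]
  have l11 : l1 1 = 0 := by simp [hl1]
  by_cases h : l1 0 ≤ l1 1
  · have h2 : minIdx (m := 1) l1 = 0 := by rw [minIdx_two, if_pos h]
    right
    rw [fl_cons, h2, fl_nil]
    rw [Function.update_apply, if_neg (by decide : (1 : Fin 2) ≠ 0), l11]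
    exact hb
  · have h2 : minIdx (m := 1) l1 = 1 := by rw [minIdx_two, if_neg h]
    right
    rw [fl_cons, h2, fl_nil]
    rw [Function.update_apply, if_pos rfl, l11]
    linarith

lemma Bmin3 (a b c : ℝ) (hc : 0 ≤ c) (hbc : c ≤ b) (hab : b ≤ a) :
    fl (fun _ => 0) [a, b, c] 0 ≤ a ∨ fl (fun _ => 0) [a, b, c] 1 ≤ a := by
  have ha : 0 ≤ a := le_trans (le_trans hc hbc) hab
  have h0 : minIdx (m := 1) (fun _ => (0:ℝ)) = 0 := by rw [minIdx_two]; norm_num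
  rw [fl_cons, h0]
  set l1 : Fin 2 → ℝ := Function.update (fun _ => (0:ℝ)) 0 ((fun _ => (0:ℝ)) 0 + a) with hl1
  have l10 : l1 0 = a := by simp [hl1]
  have l11 : l1 1 = 0 := by simp [hl1]
  by_cases h : l1 0 ≤ l1 1
  · have h2 : minIdx (m := 1) l1 = 0 := by rw [minIdx_two, if_pos h]
    rw [fl_cons, h2]
    set l2 : Fin 2 → ℝ := Function.update l1 0 (l1 0 + b) with hl2
    have l20 : l2 0 = a + b := by simp [hl2, l10]
    have l21 : l2 1 = 0 := by rw [hl2, Function.update_apply, if_neg (by decide : (1 : Fin 2) ≠ 0), l11]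
    by_cases h3 : l2 0 ≤ l2 1
    · have h4 : minIdx (m := 1) l2 = 0 := by rw [minIdx_two, if_pos h3]
      right
      rw [fl_cons, h4, fl_nil]
      rw [Function.update_apply, if_neg (by decide : (1 : Fin 2) ≠ 0), l21]
      exact ha
    · have h4 : minIdx (m := 1) l2 = 1 := by rw [minIdx_two, if_neg h3]
      right
      rw [fl_cons, h4, fl_nil]
      rw [Function.update_apply, if_pos rfl, l21]
      linarith
  · have h2 : minIdx (m := 1) l1 = 1 := by rw [minIdx_two, if_neg h]
    rw [fl_cons, h2]
    set l2 : Fin 2 → ℝ := Function.update l1 1 (l1 1 + b) with hl2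
    have l20 : l2 0 = a := by rw [hl2, Function.update_apply, if_neg (by decide : (0 : Fin 2) ≠ 1), l10]
    have l21 : l2 1 = b := by simp [hl2, l11]
    by_cases h3 : l2 0 ≤ l2 1
    · have h4 : minIdx (m := 1) l2 = 0 := by rw [minIdx_two, if_pos h3]
      right
      rw [fl_cons, h4, fl_nil]
      rw [Function.update_apply, if_neg (by decide : (1 : Fin 2) ≠ 0), l21]
      exact hab
    · have h4 : minIdx (m := 1) l2 = 1 := by rw [minIdx_two, if_neg h3]
      left
      rw [fl_cons, h4, fl_nil]
      rw [Function.update_apply, if_neg (by decide : (0 : Fin 2) ≠ 1), l20]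

noncomputable def optVal (jobs : List ℝ) (z : Fin jobs.length → Fin 2) : ℝ :=
  Finset.univ.sup' Finset.univ_nonempty
    (fun i => ∑ j : Fin jobs.length, if z j = i then jobs.get j else 0)

lemma optMakespan_eq (jobs : List ℝ) :
    optMakespan 1 jobs = ⨅ z : Fin jobs.length → Fin 2, optVal jobs z := rfl

lemma conj1 : makespan [3, 3, 2, 2, 2] (lpt 1 [3, 3, 2, 2, 2]) = 7 := by
  rw [makespan_lpt]
  norm_num [fl, minIdx_two, Function.update]
lemma opt_exists (jobs : List ℝ) :
    ∃ z, (⨅ z : Fin jobs.length → Fin 2, optVal jobs z) = optVal jobs z ∧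
      ∀ z', optVal jobs z ≤ optVal jobs z' := by
  obtain ⟨z, hz⟩ := Finite.exists_min (optVal jobs)
  refine ⟨z, ?_, hz⟩
  apply le_antisymm
  · exact ciInf_le (Set.Finite.bddBelow (Set.finite_range _)) z
  · exact le_ciInf hz

lemma load_ge (jobs : List ℝ) (hnn : ∀ a ∈ jobs, 0 ≤ a) (z : Fin jobs.length → Fin 2)
    (i : Fin 2) (s : Finset (Fin jobs.length)) (hs : ∀ j ∈ s, z j = i) :
    ∑ j ∈ s, jobs.get j ≤ optVal jobs z := by
  refine le_trans ?_ (Finset.le_sup' _ (Finset.mem_univ i))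
  calc ∑ j ∈ s, jobs.get j = ∑ j ∈ s, if z j = i then jobs.get j else 0 := by
        apply Finset.sum_congr rfl
        intro j hj; rw [if_pos (hs j hj)]
    _ ≤ ∑ j : Fin jobs.length, if z j = i then jobs.get j else 0 := by
        apply Finset.sum_le_sum_of_subset_of_nonneg (Finset.subset_univ s)
        intro j _ _
        split
        · exact hnn _ (jobs.get_mem j)
        · exact le_refl _

lemma val_ge_half (jobs : List ℝ) (z : Fin jobs.length → Fin 2) :
    jobs.sum / 2 ≤ optVal jobs z := by
  have hsum : (∑ j : Fin jobs.length, if z j = 0 then jobs.get j else 0)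
      + (∑ j : Fin jobs.length, if z j = 1 then jobs.get j else 0) = jobs.sum := by
    rw [← Finset.sum_add_distrib]
    rw [show jobs.sum = ∑ j : Fin jobs.length, jobs.get j by
      simp only [List.get_eq_getElem]; exact (Fin.sum_univ_getElem jobs).symm ]
    apply Finset.sum_congr rfl
    intro j _
    rcases Fin.exists_fin_two.mp ⟨z j, rfl⟩ with h | h <;> simp [h]
  have h0 := Finset.le_sup' (f := fun i => ∑ j : Fin jobs.length, if z j = i then jobs.get j else 0) (Finset.mem_univ (0 : Fin 2))
  have h1 := Finset.le_sup' (f := fun i => ∑ j : Fin jobs.length, if z j = i then jobs.get j else 0) (Finset.mem_univ (1 : Fin 2))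
  unfold optVal
  linarith
lemma opt_mono (ys : List ℝ) (x : ℝ) (hx : 0 ≤ x) :
    (⨅ z : Fin ys.length → Fin 2, optVal ys z)
      ≤ ⨅ z : Fin (ys ++ [x]).length → Fin 2, optVal (ys ++ [x]) z := by
  have e : (ys ++ [x]).length = ys.length + 1 := by simp
  apply le_ciInf
  intro z
  set z' : Fin ys.length → Fin 2 := fun j => z (Fin.cast e.symm j.castSucc) with hz'
  refine le_trans (ciInf_le (Set.Finite.bddBelow (Set.finite_range _)) z') ?_
  apply Finset.sup'_le
  intro i _
  refine le_trans ?_ (Finset.le_sup'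
    (f := fun i => ∑ j : Fin (ys ++ [x]).length, if z j = i then (ys ++ [x]).get j else 0)
    (Finset.mem_univ i))
  have hre : (∑ j : Fin (ys ++ [x]).length, if z j = i then (ys ++ [x]).get j else 0)
      = ∑ j : Fin (ys.length + 1),
        (if z (Fin.cast e.symm j) = i then (ys ++ [x]).get (Fin.cast e.symm j) else 0) :=
    (Equiv.sum_comp (finCongr e.symm)
      (fun j => if z j = i then (ys ++ [x]).get j else 0)).symm
  rw [hre, Fin.sum_univ_castSucc]
  have hlast : (0:ℝ) ≤ if z (Fin.cast e.symm (Fin.last ys.length)) = i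
      then (ys ++ [x]).get (Fin.cast e.symm (Fin.last ys.length)) else 0 := by
    have : (ys ++ [x]).get (Fin.cast e.symm (Fin.last ys.length)) = x := by
      simp [List.get_eq_getElem]
    rw [this]
    split <;> [exact hx; exact le_refl _]
  have hmain : ∀ j : Fin ys.length,
      (if z (Fin.cast e.symm j.castSucc) = i
        then (ys ++ [x]).get (Fin.cast e.symm j.castSucc) else 0)
      = if z' j = i then ys.get j else 0 := by
    intro j
    have : (ys ++ [x]).get (Fin.cast e.symm j.castSucc) = ys.get j := by
      simp [List.get_eq_getElem, List.getElem_append_left, j.2]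
    rw [this, hz']
  rw [Finset.sum_congr rfl (fun j _ => hmain j)]
  linarith

lemma conj2 : optMakespan 1 [3, 3, 2, 2, 2] = 6 := by
  rw [optMakespan_eq]
  apply le_antisymm
  · refine ciInf_le_of_le (Set.Finite.bddBelow (Set.finite_range _)) (![0,0,1,1,1]) ?_
    unfold optVal
    rw [sup2, max_le_iff]
    constructor
    · show (∑ x : Fin 5, if ![0, 0, 1, 1, 1] x = (0 : Fin 2) then ([3, 3, 2, 2, 2] : List ℝ).get x else 0) ≤ 6
      rw [Fin.sum_univ_five]
      norm_num [show ((3 : Fin 5) : ℕ) = 3 from rfl, show ((4 : Fin 5) : ℕ) = 4 from rfl, show (![0, 0, 1, 1, 1] : Fin 5 → Fin 2) 2 = 1 from rfl, show (![0, 0, 1, 1, 1] : Fin 5 → Fin 2) 3 = 1 from rfl, show (![0, 0, 1, 1, 1] : Fin 5 → Fin 2) 4 = 1 from rfl]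
    · show (∑ x : Fin 5, if ![0, 0, 1, 1, 1] x = (1 : Fin 2) then ([3, 3, 2, 2, 2] : List ℝ).get x else 0) ≤ 6
      rw [Fin.sum_univ_five]
      norm_num [show ((3 : Fin 5) : ℕ) = 3 from rfl, show ((4 : Fin 5) : ℕ) = 4 from rfl, show (![0, 0, 1, 1, 1] : Fin 5 → Fin 2) 2 = 1 from rfl, show (![0, 0, 1, 1, 1] : Fin 5 → Fin 2) 3 = 1 from rfl, show (![0, 0, 1, 1, 1] : Fin 5 → Fin 2) 4 = 1 from rfl]
  · apply le_ciInf
    intro z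
    have h := val_ge_half [3,3,2,2,2] z
    norm_num at h
    exact h

lemma optVal_nonneg (jobs : List ℝ) (hnn : ∀ a ∈ jobs, 0 ≤ a) (z : Fin jobs.length → Fin 2) :
    0 ≤ optVal jobs z := by
  have h1 : (0:ℝ) ≤ jobs.sum / 2 := by
    have := List.sum_nonneg hnn
    linarith
  exact le_trans h1 (val_ge_half jobs z)

lemma len_le_four (jobs : List ℝ) (hnn : ∀ a ∈ jobs, 0 ≤ a) (x : ℝ)
    (hge : ∀ a ∈ jobs, x ≤ a) (z : Fin jobs.length → Fin 2)
    (hlt : optVal jobs z < 3 * x) : jobs.length ≤ 4 := by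
  by_contra h
  push_neg at h
  have hw : ∀ w : Fin 2, (¬ w = 0) ↔ w = 1 := by decide
  have hcard := Finset.card_filter_add_card_filter_not
    (s := (Finset.univ : Finset (Fin jobs.length))) (p := fun j => z j = 0)
  simp only [hw, Finset.card_univ, Fintype.card_fin] at hcard
  have h3 : 3 ≤ (Finset.univ.filter (fun j => z j = (0 : Fin 2))).card ∨
      3 ≤ (Finset.univ.filter (fun j => z j = (1 : Fin 2))).card := by omega
  obtain ⟨i, hi3⟩ : ∃ i : Fin 2, 3 ≤ (Finset.univ.filter (fun j => z j = i)).card := by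
    rcases h3 with h3 | h3
    · exact ⟨0, h3⟩
    · exact ⟨1, h3⟩
  obtain ⟨s, hsub, hcard3⟩ := Finset.exists_subset_card_eq hi3
  have hload := load_ge jobs hnn z i s (fun j hj => (Finset.mem_filter.mp (hsub hj)).2)
  have hgt : 3 * x ≤ ∑ j ∈ s, jobs.get j := by
    calc 3 * x = ∑ _j ∈ s, x := by rw [Finset.sum_const, hcard3]; simp
    _ ≤ ∑ j ∈ s, jobs.get j := Finset.sum_le_sum (fun j _ => hge _ (jobs.get_mem j))
  linarith

lemma x_le_opt (ys : List ℝ) (x : ℝ) (hnn : ∀ a ∈ ys ++ [x], 0 ≤ a)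
    (z : Fin (ys ++ [x]).length → Fin 2) : x ≤ optVal (ys ++ [x]) z := by
  have hl : ys.length < (ys ++ [x]).length := by simp
  set j0 : Fin (ys ++ [x]).length := ⟨ys.length, hl⟩ with hj0
  have hget : (ys ++ [x]).get j0 = x := by
    simp [hj0, List.get_eq_getElem]
  have := load_ge (ys ++ [x]) hnn z (z j0) {j0} (by simp)
  rwa [Finset.sum_singleton, hget] at this

lemma pair3 (a b x : ℝ) (hxb : x ≤ b) (hba : b ≤ a)
    (hnn : ∀ w ∈ [a, b] ++ [x], 0 ≤ w) (z : Fin (([a, b] ++ [x]).length) → Fin 2) :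
    b + x ≤ optVal ([a, b] ++ [x]) z := by
  obtain ⟨i, j, hij, hzij⟩ := Fintype.exists_ne_map_eq_of_card_lt z (by simp)
  have hsum := load_ge ([a, b] ++ [x]) hnn z (z i) {i, j} (by
    intro k hk
    rcases Finset.mem_insert.mp hk with rfl | hk
    · rfl
    · rw [Finset.mem_singleton.mp hk, ← hzij])
  rw [Finset.sum_pair hij] at hsum
  have hval : ∀ k : Fin (([a, b] ++ [x]).length), k.1 = 0 ∨ k.1 = 1 ∨ k.1 = 2 := by
    intro k
    have : k.1 < 3 := k.2
    omega
  have hg0 : ∀ k : Fin (([a, b] ++ [x]).length), k.1 = 0 → ([a, b] ++ [x]).get k = a := by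
    intro k hk; simp [List.get_eq_getElem, hk]
  have hg1 : ∀ k : Fin (([a, b] ++ [x]).length), k.1 = 1 → ([a, b] ++ [x]).get k = b := by
    intro k hk; simp [List.get_eq_getElem, hk]
  have hg2 : ∀ k : Fin (([a, b] ++ [x]).length), k.1 = 2 → ([a, b] ++ [x]).get k = x := by
    intro k hk; simp [List.get_eq_getElem, hk]
  have hne : i.1 ≠ j.1 := fun e => hij (Fin.ext e)
  refine le_trans ?_ hsum
  rcases hval i with h | h | h <;> rcases hval j with h' | h' | h' <;>
    first
    | (exact absurd (h.trans h'.symm) hne)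
    | (first
       | rw [hg0 i h] | rw [hg1 i h] | rw [hg2 i h]) <;>
      (first
       | rw [hg0 j h'] | rw [hg1 j h'] | rw [hg2 j h']) <;> linarith

lemma quad4 (a b c x : ℝ) (hxc : x ≤ c) (hcb : c ≤ b) (hba : b ≤ a)
    (hnn : ∀ w ∈ [a, b, c] ++ [x], 0 ≤ w) (z : Fin (([a, b, c] ++ [x]).length) → Fin 2)
    (hlt : optVal ([a, b, c] ++ [x]) z < 3 * x) :
    a + x ≤ optVal ([a, b, c] ++ [x]) z := by
  have two_ne : ∀ p q r : Fin 2, p ≠ r → q ≠ r → p = q := by decide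
  set k0 : Fin (([a, b, c] ++ [x]).length) := ⟨0, by simp⟩ with hk0
  set k1 : Fin (([a, b, c] ++ [x]).length) := ⟨1, by simp⟩ with hk1
  set k2 : Fin (([a, b, c] ++ [x]).length) := ⟨2, by simp⟩ with hk2
  set k3 : Fin (([a, b, c] ++ [x]).length) := ⟨3, by simp⟩ with hk3
  have g0 : ([a, b, c] ++ [x]).get k0 = a := rfl
  have g1 : ([a, b, c] ++ [x]).get k1 = b := rfl
  have g2 : ([a, b, c] ++ [x]).get k2 = c := rfl
  have g3 : ([a, b, c] ++ [x]).get k3 = x := rfl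
  by_cases h1 : z k1 = z k0
  · have hsum := load_ge ([a, b, c] ++ [x]) hnn z (z k0) {k0, k1} (by
      intro k hk
      rcases Finset.mem_insert.mp hk with rfl | hk
      · rfl
      · rw [Finset.mem_singleton.mp hk, h1])
    rw [Finset.sum_pair (by simp [hk0, hk1, Fin.ext_iff]; try omega : k0 ≠ k1), g0, g1] at hsum
    linarith
  by_cases h2 : z k2 = z k0
  · have hsum := load_ge ([a, b, c] ++ [x]) hnn z (z k0) {k0, k2} (by
      intro k hk
      rcases Finset.mem_insert.mp hk with rfl | hk
      · rfl
      · rw [Finset.mem_singleton.mp hk, h2])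
    rw [Finset.sum_pair (by simp [hk0, hk2, Fin.ext_iff]; try omega : k0 ≠ k2), g0, g2] at hsum
    linarith
  by_cases h3 : z k3 = z k0
  · have hsum := load_ge ([a, b, c] ++ [x]) hnn z (z k0) {k0, k3} (by
      intro k hk
      rcases Finset.mem_insert.mp hk with rfl | hk
      · rfl
      · rw [Finset.mem_singleton.mp hk, h3])
    rw [Finset.sum_pair (by simp [hk0, hk3, Fin.ext_iff]; try omega : k0 ≠ k3), g0, g3] at hsum
    linarith
  · have h12 : z k1 = z k2 := two_ne _ _ _ h1 h2
    have h13 : z k1 = z k3 := two_ne _ _ _ h1 h3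
    have hsum := load_ge ([a, b, c] ++ [x]) hnn z (z k1) {k1, k2, k3} (by
      intro k hk
      rcases Finset.mem_insert.mp hk with rfl | hk
      · rfl
      rcases Finset.mem_insert.mp hk with rfl | hk
      · exact h12.symm
      · rw [Finset.mem_singleton.mp hk, ← h13])
    rw [Finset.sum_insert (by simp [hk1, hk2, hk3, Fin.ext_iff]; try omega),
      Finset.sum_pair (by simp [hk2, hk3, Fin.ext_iff]; try omega : k2 ≠ k3), g1, g2, g3] at hsum
    linarith

lemma fin2_cases : ∀ w : Fin 2, w = 0 ∨ w = 1 := by decide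

lemma max_update2 (L : Fin 2 → ℝ) (i : Fin 2) (v : ℝ) (h : ∀ j, L j ≤ v) :
    max (Function.update L i v 0) (Function.update L i v 1) = v := by
  rcases fin2_cases i with hi | hi <;> subst hi
  · rw [Function.update_self, Function.update_of_ne (by decide)]
    exact max_eq_left (h 1)
  · rw [Function.update_of_ne (by decide), Function.update_self]
    exact max_eq_right (h 0)

lemma nil_bound : makespan ([] : List ℝ) (lpt 1 []) ≤ (7 / 6) * optMakespan 1 [] := by
  rw [makespan_lpt]
  have h0 : ∀ i, fl (fun _ => (0:ℝ)) [] i = 0 := fun _ => rfl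
  rw [h0, h0]
  have hopt : (0:ℝ) ≤ optMakespan 1 [] := by
    rw [optMakespan_eq]
    exact le_ciInf (fun z => optVal_nonneg [] (by simp) z)
  norm_num
  linarith

lemma main_bound : ∀ (n : ℕ) (jobs : List ℝ), jobs.length ≤ n →
    jobs.Pairwise (· ≥ ·) → (∀ a ∈ jobs, 0 ≤ a) →
    makespan jobs (lpt 1 jobs) ≤ (7 / 6) * optMakespan 1 jobs := by
  intro n
  induction n with
  | zero =>
    intro jobs hlen _ _
    have : jobs = [] := List.length_eq_zero_iff.mp (Nat.le_zero.mp hlen)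
    subst this
    exact nil_bound
  | succ n ih =>
    intro jobs hlen hsorted hnn
    rcases List.eq_nil_or_concat jobs with rfl | ⟨ys, x, rfl⟩
    · exact nil_bound
    simp only [List.concat_eq_append] at hlen hsorted hnn ⊢
    have hx : 0 ≤ x := hnn x (by simp)
    have hys_nonneg : ∀ a ∈ ys, 0 ≤ a := fun a ha => hnn a (by simp [ha])
    have hsortpair := (List.pairwise_append).mp hsorted
    have hys_sorted : ys.Pairwise (· ≥ ·) := hsortpair.1
    have hgeys : ∀ a ∈ ys, x ≤ a := fun a ha => hsortpair.2.2 a ha x (by simp)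
    have hge : ∀ a ∈ ys ++ [x], x ≤ a := by
      intro a ha
      rcases List.mem_append.mp ha with h | h
      · exact hgeys a h
      · simp at h; exact h.ge
    set L := fl (fun _ => 0) ys with hL
    set i0 := minIdx (m := 1) L with hi0
    set B := L i0 with hB
    have hBle : ∀ j, B ≤ L j := fun j => minIdx_le L j
    have hsumL : L 0 + L 1 = ys.sum := by rw [hL, fl_sum]; simp
    have hflx : fl (fun _ => 0) (ys ++ [x]) = Function.update L i0 (B + x) := by
      rw [fl_append, ← hL]
      rfl
    have hms : makespan (ys ++ [x]) (lpt 1 (ys ++ [x]))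
        = max (Function.update L i0 (B + x) 0) (Function.update L i0 (B + x) 1) := by
      rw [makespan_lpt, hflx]
    obtain ⟨z, hzeq, hzmin⟩ := opt_exists (ys ++ [x])
    set opt := optMakespan 1 (ys ++ [x]) with hoptdef
    have hopt_eq : opt = optVal (ys ++ [x]) z := by rw [hoptdef, optMakespan_eq, hzeq]
    have hxopt : x ≤ opt := by rw [hopt_eq]; exact x_le_opt ys x hnn z
    have hopt_half : (ys.sum + x) / 2 ≤ opt := by
      have h := val_ge_half (ys ++ [x]) z
      rw [List.sum_append, List.sum_cons, List.sum_nil] at h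
      rw [hopt_eq]
      linarith
    have hopt0 : 0 ≤ opt := le_trans hx hxopt
    clear_value L i0 B opt
    by_cases hcase : L 0 ≤ B + x ∧ L 1 ≤ B + x
    · have hms2 : makespan (ys ++ [x]) (lpt 1 (ys ++ [x])) = B + x := by
        rw [hms]
        exact max_update2 L i0 (B + x) (fun j => by
          rcases fin2_cases j with hj | hj <;> subst hj
          · exact hcase.1
          · exact hcase.2)
      by_cases hsmall : 3 * x ≤ opt
      · have hB_half : B ≤ ys.sum / 2 := by
          have h0 := hBle 0
          have h1 := hBle 1
          linarith
        rw [hms2]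
        linarith
      · push_neg at hsmall
        have hlt : optVal (ys ++ [x]) z < 3 * x := by rw [← hopt_eq]; exact hsmall
        have hlen4 : (ys ++ [x]).length ≤ 4 := len_le_four _ hnn x hge z hlt
        have hyslen : ys.length ≤ 3 := by
          rw [List.length_append, List.length_singleton] at hlen4
          omega
        suffices hfin : B + x ≤ opt by rw [hms2]; linarith
        rcases ys with _ | ⟨a, _ | ⟨b, _ | ⟨c, _ | ⟨d, tl⟩⟩⟩⟩
        · have hB0 : B = 0 := by rw [hB, hL]; rfl
          linarith
        · have hL1 : L 1 = 0 := by
            rw [hL]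
            norm_num [fl, minIdx_two, Function.update]
          have := hBle 1
          linarith
        · have hba : b ≤ a := by
            rw [List.pairwise_cons] at hys_sorted
            exact hys_sorted.1 b (by simp)
          have hxb : x ≤ b := hgeys b (by simp)
          have hb0 : 0 ≤ b := le_trans hx hxb
          have hBb : B ≤ b := by
            rcases Bmin2 a b hb0 hba with h | h
            · exact le_trans (hBle 0) (by rw [hL]; exact h)
            · exact le_trans (hBle 1) (by rw [hL]; exact h)
          have hp := pair3 a b x hxb hba hnn z
          rw [← hopt_eq] at hp
          linarith
        · have hsc := hys_sorted
          rw [List.pairwise_cons] at hsc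
          have hba : b ≤ a := hsc.1 b (by simp)
          have hcb : c ≤ b := by
            have h2 := hsc.2
            rw [List.pairwise_cons] at h2
            exact h2.1 c (by simp)
          have hxc : x ≤ c := hgeys c (by simp)
          have hc0 : 0 ≤ c := le_trans hx hxc
          have hBa : B ≤ a := by
            rcases Bmin3 a b c hc0 hcb hba with h | h
            · exact le_trans (hBle 0) (by rw [hL]; exact h)
            · exact le_trans (hBle 1) (by rw [hL]; exact h)
          have hq := quad4 a b c x hxc hcb hba hnn z hlt
          rw [← hopt_eq] at hq
          linarith
        · exfalso
          simp at hyslen; omega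
    · obtain ⟨j, hj⟩ : ∃ j, B + x < L j := by
        rcases not_and_or.mp hcase with h | h
        · exact ⟨0, lt_of_not_ge h⟩
        · exact ⟨1, lt_of_not_ge h⟩
      have hji : j ≠ i0 := by
        intro e
        rw [e, ← hB] at hj
        linarith
      have hmseq : makespan (ys ++ [x]) (lpt 1 (ys ++ [x])) = makespan ys (lpt 1 ys) := by
        rw [hms, makespan_lpt, ← hL]
        rcases fin2_cases i0 with h0 | h0 <;> rcases fin2_cases j with hj0 | hj0 <;>
            subst h0 <;> subst hj0
        · exact absurd rfl hji
        · rw [Function.update_self, Function.update_of_ne (by decide)]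
          have hL0 : L 0 = B := hB.symm
          rw [max_eq_right (le_of_lt hj), max_eq_right (by rw [hL0]; linarith)]
        · rw [Function.update_self, Function.update_of_ne (by decide)]
          have hL1 : L 1 = B := hB.symm
          rw [max_eq_left (le_of_lt hj), max_eq_left (by rw [hL1]; linarith)]
        · exact absurd rfl hji
      rw [hmseq]
      have hny : ys.length ≤ n := by
        rw [List.length_append, List.length_singleton] at hlen
        omega
      have hih := ih ys hny hys_sorted hys_nonneg
      have hmono : optMakespan 1 ys ≤ opt := by
        rw [hoptdef, optMakespan_eq, optMakespan_eq]
        exact opt_mono ys x hx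
      linarith

/-- The hard instance for LPT on `m = 2` machines. On `x = (3,3,2,2,2)`, LPT achieves
makespan `7` while the optimum is `6`, so the ratio is `7/6 = (4·2−1)/(3·2)`; moreover
`7/6` is an upper bound on the ratio of LPT's makespan to the optimal makespan for every
sorted non-negative input on `2` machines (Graham's bound for `m = 2`). -/
theorem lpt_two_machines_hard_example :
    makespan [3, 3, 2, 2, 2] (lpt 1 [3, 3, 2, 2, 2]) = 7 ∧
    optMakespan 1 [3, 3, 2, 2, 2] = 6 ∧
    ∀ jobs : List ℝ, jobs.Pairwise (· ≥ ·) → (∀ a ∈ jobs, 0 ≤ a) →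
      makespan jobs (lpt 1 jobs) ≤ (7 / 6) * optMakespan 1 jobs := by
  refine ⟨conj1, conj2, ?_⟩
  intro jobs hs hnn
  exact main_bound jobs.length jobs (le_refl _) hs hnn
end

section
/- Let (X, Z, c) be a linear minimization problem: for each z ∈ Z, X is covered by finitely many polyhedra X⁽ᶻ⁾ⱼ on each of which c(·, z) is affine. Given a linear decision tree representation of algorithm A with leaf set L, the approximation ratio α = sup_{x ∈ X} c(x,A(x))/min_{z} c(x,z) equals the maximum over finitely many tuples (z*, ℓ, j_ℓ, j*) of sup over the polyhedron X_ℓ ∩ X⁽ᶻ_ℓ⁾_{j_ℓ} ∩ X⁽ᶻ*⁾_{j*} of the ratio of two affine functions of x. In particular, α is the maximum of finitely many suprema of affine-fractional functions over polyhedra. -/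
open scoped ENNReal

/-- A halfspace-like set: a closed halfspace, an open halfspace, or a hyperplane. -/
def IsHalfspaceLike {n : ℕ} (S : Set (Fin n → ℝ)) : Prop :=
  ∃ (a : Fin n → ℝ) (b : ℝ),
    S = {x | ∑ j, a j * x j ≥ b} ∨ S = {x | ∑ j, a j * x j > b} ∨
      S = {x | ∑ j, a j * x j = b}

/-- A polyhedron: a finite intersection of closed halfspaces, open halfspaces,
and hyperplanes. -/
def IsPolyhedron {n : ℕ} (S : Set (Fin n → ℝ)) : Prop :=
  ∃ (k : ℕ) (H : Fin k → Set (Fin n → ℝ)),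
    (∀ i, IsHalfspaceLike (H i)) ∧ S = ⋂ i, H i

/-- Reduction of the approximation ratio of a linear minimization problem to finitely
many suprema of affine-fractional functions over polyhedra. The input space `X` is
covered by the polyhedral leaf regions `Xs ℓ` of a linear decision tree computing `A`
(with leaf labels `zl ℓ`), and for each output `z` the cost `c(·, z)` is affine
(possibly identically `∞`) on each polyhedral piece `P z j` of a finite polyhedral
cover of `X`. Then the approximation ratio
`α = sup_{x ∈ X} c(x, A(x)) / min_z c(x, z)` equals the maximum over the finitely many
tuples `(z*, ℓ, j_ℓ, j*)` of the supremum, over the polyhedron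
`Xs ℓ ∩ P (zl ℓ) j_ℓ ∩ P z* j*`, of the ratio `c(x, zl ℓ) / c(x, z*)` of two affine
functions of `x`. -/
theorem approx_ratio_eq_max_of_fractional_sups {n : ℕ} {Z L : Type*}
    [Fintype Z] [Nonempty Z] [Fintype L] [Nonempty L]
    (X : Set (Fin n → ℝ))
    (c : (Fin n → ℝ) → Z → ℝ≥0∞) (hfin : ∀ x ∈ X, ∃ z : Z, c x z ≠ ⊤)
    (A : (Fin n → ℝ) → Z)
    (Xs : L → Set (Fin n → ℝ)) (hXspoly : ∀ ℓ, IsPolyhedron (Xs ℓ))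
    (hcover : X = ⋃ ℓ, Xs ℓ)
    (zl : L → Z) (hA : ∀ ℓ, ∀ x ∈ Xs ℓ, A x = zl ℓ)
    (k : Z → ℕ) (P : (z : Z) → Fin (k z) → Set (Fin n → ℝ))
    (hPpoly : ∀ z j, IsPolyhedron (P z j))
    (hPcover : ∀ z : Z, X ⊆ ⋃ j, P z j)
    (haff : ∀ z j, (∀ x ∈ X ∩ P z j, c x z = ⊤) ∨
      ∃ (a : Fin n → ℝ) (b : ℝ), ∀ x ∈ X ∩ P z j,
        c x z = ENNReal.ofReal (∑ i, a i * x i + b)) :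
    (⨆ x ∈ X, c x (A x) / ⨅ z : Z, c x z)
      = ⨆ zs : Z, ⨆ ℓ : L, ⨆ j₁ : Fin (k (zl ℓ)), ⨆ j₂ : Fin (k zs),
          ⨆ x ∈ X ∩ Xs ℓ ∩ P (zl ℓ) j₁ ∩ P zs j₂, c x (zl ℓ) / c x zs := by
  apply le_antisymm
  · refine iSup₂_le fun x hx => ?_
    obtain ⟨ℓ, hℓ⟩ : ∃ ℓ, x ∈ Xs ℓ := by
      have := hcover ▸ hx; simpa using this
    obtain ⟨j₁, hj₁⟩ : ∃ j, x ∈ P (zl ℓ) j := by simpa using hPcover (zl ℓ) hx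
    obtain ⟨zs, hzs⟩ := Finite.exists_min (fun z => c x z)
    obtain ⟨j₂, hj₂⟩ : ∃ j, x ∈ P zs j := by simpa using hPcover zs hx
    have hinf : ⨅ z : Z, c x z = c x zs := le_antisymm (iInf_le _ _) (le_iInf hzs)
    have hAx : A x = zl ℓ := hA ℓ x hℓ
    calc c x (A x) / ⨅ z : Z, c x z = c x (zl ℓ) / c x zs := by rw [hAx, hinf]
      _ ≤ _ := by
        refine le_trans ?_ (le_iSup _ zs)
        refine le_trans ?_ (le_iSup _ ℓ)
        refine le_trans ?_ (le_iSup _ j₁)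
        refine le_trans ?_ (le_iSup _ j₂)
        exact le_iSup₂ (f := fun x _ => c x (zl ℓ) / c x zs) x ⟨⟨⟨hx, hℓ⟩, hj₁⟩, hj₂⟩
  · refine iSup_le fun zs => iSup_le fun ℓ => iSup_le fun j₁ => iSup_le fun j₂ =>
      iSup₂_le fun x hx => ?_
    obtain ⟨⟨⟨hxX, hxℓ⟩, _⟩, _⟩ := hx
    have hAx : A x = zl ℓ := hA ℓ x hxℓ
    refine le_trans ?_ (le_iSup₂ (f := fun x _ => c x (A x) / ⨅ z : Z, c x z) x hxX)
    rw [hAx]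
    exact ENNReal.div_le_div_left (iInf_le _ zs) _
end
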